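/- Canonical form theorem (skew case, 1-dimensional): every formally skew-adjoint linear differential operator L of order k on smooth functions on ℝ with smooth coefficients can be written as L = Σ_{i=0}^{(k-1)/2} D^i ∘ (f ↦ A_i · D f + D(A_i · f)) ∘ D^i for suitable smooth functions A_i. -/

import Mathlib

open MeasureTheory Finset

/-- `i`-th iterated derivative `D^i`. -/
noncomputable def Dop (i : ℕ) (f : ℝ → ℝ) : ℝ → ℝ := deriv^[i] f

/-- The differential operator `L = Σ_{i=0}^k a_i D^i`. -/
noncomputable def LOp (k : ℕ) (a : ℕ → ℝ → ℝ) (f : ℝ → ℝ) : ℝ → ℝ :=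
  fun x => ∑ i ∈ Finset.range (k + 1), a i x * Dop i f x

/-- The formal adjoint `L* g = Σ_{i=0}^k (-1)^i D^i (a_i · g)`. -/
noncomputable def adjOp (k : ℕ) (a : ℕ → ℝ → ℝ) (g : ℝ → ℝ) : ℝ → ℝ :=
  fun x => ∑ i ∈ Finset.range (k + 1), (-1 : ℝ) ^ i * Dop i (fun y => a i y * g y) x

-- basic smoothness facts (⊤ here is ω, the analytic class)
lemma cd_deriv {f : ℝ → ℝ} (hf : ContDiff ℝ (⊤ : ℕ∞) f) : ContDiff ℝ (⊤ : ℕ∞) (deriv f) := by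
  exact (contDiff_infty_iff_deriv.mp hf).2

lemma cd_diff {f : ℝ → ℝ} (hf : ContDiff ℝ (⊤ : ℕ∞) f) (x : ℝ) : DifferentiableAt ℝ f x :=
  (hf.differentiable (by simp)).differentiableAt

lemma cd_dop {f : ℝ → ℝ} (hf : ContDiff ℝ (⊤ : ℕ∞) f) (n : ℕ) : ContDiff ℝ (⊤ : ℕ∞) (Dop n f) := by
  induction n with
  | zero => exact hf
  | succ n ih =>
    rw [show Dop (n+1) f = deriv (Dop n f) from Function.iterate_succ_apply' _ _ _]
    exact cd_deriv ih

lemma Dop_zero (f : ℝ → ℝ) : Dop 0 f = f := rfl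

lemma Dop_succ (n : ℕ) (f : ℝ → ℝ) : Dop (n+1) f = Dop n (deriv f) :=
  Function.iterate_succ_apply _ _ _

lemma Dop_succ' (n : ℕ) (f : ℝ → ℝ) : Dop (n+1) f = deriv (Dop n f) :=
  Function.iterate_succ_apply' _ _ _

lemma Dop_zero_fun (n : ℕ) : Dop n (fun _ : ℝ => (0:ℝ)) = fun _ => 0 := by
  induction n with
  | zero => rfl
  | succ n ih => rw [Dop_succ, deriv_const']; exact ih

lemma Dop_add (n : ℕ) {f g : ℝ → ℝ} (hf : ContDiff ℝ (⊤ : ℕ∞) f) (hg : ContDiff ℝ (⊤ : ℕ∞) g) :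
    Dop n (fun x => f x + g x) = fun x => Dop n f x + Dop n g x := by
  induction n generalizing f g with
  | zero => rfl
  | succ n ih =>
    rw [Dop_succ, Dop_succ n f, Dop_succ n g,
      show deriv (fun x => f x + g x) = fun x => deriv f x + deriv g x from
        funext fun x => deriv_add (cd_diff hf x) (cd_diff hg x)]
    exact ih (cd_deriv hf) (cd_deriv hg)

lemma Dop_sub (n : ℕ) {f g : ℝ → ℝ} (hf : ContDiff ℝ (⊤ : ℕ∞) f) (hg : ContDiff ℝ (⊤ : ℕ∞) g) :
    Dop n (fun x => f x - g x) = fun x => Dop n f x - Dop n g x := by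
  induction n generalizing f g with
  | zero => rfl
  | succ n ih =>
    rw [Dop_succ, Dop_succ n f, Dop_succ n g,
      show deriv (fun x => f x - g x) = fun x => deriv f x - deriv g x from
        funext fun x => deriv_sub (cd_diff hf x) (cd_diff hg x)]
    exact ih (cd_deriv hf) (cd_deriv hg)

lemma cd_pow (c : ℝ) (j : ℕ) : ContDiff ℝ (⊤ : ℕ∞) (fun y : ℝ => (y - c)^j) :=
  (contDiff_id.sub contDiff_const).pow j

lemma deriv_mul_pow (c : ℝ) (j : ℕ) {u : ℝ → ℝ} (hu : ContDiff ℝ (⊤ : ℕ∞) u) :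
    deriv (fun y => u y * (y - c)^(j+1)) =
      fun y => (deriv u y * (y - c) + ((j:ℝ)+1) * u y) * (y - c)^j := by
  funext y
  have h1 : HasDerivAt (fun y : ℝ => (y - c)^(j+1))
      (((j:ℝ)+1) * (y - c)^j * 1) y := by
    have := ((hasDerivAt_id y).sub_const c).fun_pow (j+1)
    simpa using this
  rw [deriv_fun_mul (cd_diff hu y) h1.differentiableAt, h1.deriv]
  ring

lemma Dop_mul_pow_self (c : ℝ) :
    ∀ (k : ℕ) (u : ℝ → ℝ), ContDiff ℝ (⊤ : ℕ∞) u →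
      Dop k (fun y => u y * (y - c)^k) c = (k.factorial : ℝ) * u c := by
  intro k
  induction k with
  | zero => intro u hu; simp [Dop]
  | succ k ih =>
    intro u hu
    rw [Dop_succ, deriv_mul_pow c k hu]
    have hu1 : ContDiff ℝ (⊤ : ℕ∞) (fun y => deriv u y * (y - c) + ((k:ℝ)+1) * u y) :=
      ((cd_deriv hu).mul (contDiff_id.sub contDiff_const)).add (contDiff_const.mul hu)
    rw [ih _ hu1]
    simp [Nat.factorial_succ]
    ring

lemma Dop_mul_pow_lt (c : ℝ) :
    ∀ (i j : ℕ) (u : ℝ → ℝ), ContDiff ℝ (⊤ : ℕ∞) u → i < j →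
      Dop i (fun y => u y * (y - c)^j) c = 0 := by
  intro i
  induction i with
  | zero =>
    intro j u hu hij
    simp [Dop]
    right
    omega
  | succ i ih =>
    intro j u hu hij
    obtain ⟨j', rfl⟩ : ∃ j', j = j' + 1 := ⟨j - 1, by omega⟩
    rw [Dop_succ, deriv_mul_pow c j' hu]
    exact ih _ _ (((cd_deriv hu).mul (contDiff_id.sub contDiff_const)).add
      (contDiff_const.mul hu)) (by omega)

noncomputable def shc (c : ℕ → ℝ → ℝ) : ℕ → ℝ → ℝ
  | 0 => fun _ => 0
  | n+1 => c n

noncomputable def conjc (c : ℕ → ℝ → ℝ) : ℕ → ℝ → ℝ :=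
  fun n x => deriv (shc c n) x + shc (shc c) n x

lemma shc_smooth {c : ℕ → ℝ → ℝ} (hc : ∀ i, ContDiff ℝ (⊤ : ℕ∞) (c i)) (n : ℕ) :
    ContDiff ℝ (⊤ : ℕ∞) (shc c n) := by
  cases n with
  | zero => exact contDiff_const
  | succ n => exact hc n

lemma conjc_smooth {c : ℕ → ℝ → ℝ} (hc : ∀ i, ContDiff ℝ (⊤ : ℕ∞) (c i)) (n : ℕ) :
    ContDiff ℝ (⊤ : ℕ∞) (conjc c n) :=
  (cd_deriv (shc_smooth hc n)).add (shc_smooth (shc_smooth hc) n)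

lemma LOp_conj (k : ℕ) (c : ℕ → ℝ → ℝ) (hc : ∀ i, ContDiff ℝ (⊤ : ℕ∞) (c i))
    (hctop : c (k+1) = fun _ => 0) {f : ℝ → ℝ} (hf : ContDiff ℝ (⊤ : ℕ∞) f) (x : ℝ) :
    LOp (k+2) (conjc c) f x = deriv (fun y => LOp k c (deriv f) y) x := by
  have hdf := cd_deriv hf
  -- RHS
  have hR : deriv (fun y => LOp k c (deriv f) y) x
      = ∑ i ∈ range (k+1), (deriv (c i) x * Dop (i+1) f x + c i x * Dop (i+2) f x) := by
    unfold LOp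
    rw [deriv_fun_sum (fun i _ => ((cd_diff (hc i) x).fun_mul (cd_diff (cd_dop hdf i) x)))]
    refine Finset.sum_congr rfl fun i _ => ?_
    rw [deriv_fun_mul (cd_diff (hc i) x) (cd_diff (cd_dop hdf i) x)]
    rw [Dop_succ i f, show Dop (i+2) f = deriv (Dop i (deriv f)) by
      rw [Dop_succ (i+1) f, Dop_succ' i (deriv f)]]
  rw [hR]
  -- LHS
  unfold LOp conjc
  have : ∀ n ∈ range (k+3), (fun n x => deriv (shc c n) x + shc (shc c) n x) n x * Dop n f x
      = deriv (shc c n) x * Dop n f x + shc (shc c) n x * Dop n f x := by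
    intro n _; ring
  rw [Finset.sum_congr rfl this, Finset.sum_add_distrib]
  have h1 : ∑ n ∈ range (k+3), deriv (shc c n) x * Dop n f x
      = ∑ i ∈ range (k+1), deriv (c i) x * Dop (i+1) f x := by
    rw [Finset.sum_range_succ' _ (k+2)]
    simp only [shc, deriv_const']
    rw [Finset.sum_range_succ, hctop]
    simp only [deriv_const']
    simp
  have h2 : ∑ n ∈ range (k+3), shc (shc c) n x * Dop n f x
      = ∑ i ∈ range (k+1), c i x * Dop (i+2) f x := by
    rw [Finset.sum_range_succ' _ (k+2)]
    simp only [shc]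
    rw [Finset.sum_range_succ' _ (k+1)]
    simp only [shc]
    simp
  rw [h1, h2, ← Finset.sum_add_distrib]

lemma adjOp_conj (k : ℕ) (c : ℕ → ℝ → ℝ) (hc : ∀ i, ContDiff ℝ (⊤ : ℕ∞) (c i))
    (hctop : c (k+1) = fun _ => 0) {g : ℝ → ℝ} (hg : ContDiff ℝ (⊤ : ℕ∞) g) (x : ℝ) :
    adjOp (k+2) (conjc c) g x = deriv (fun y => adjOp k c (deriv g) y) x := by
  have hdg := cd_deriv hg
  -- RHS
  have hR : deriv (fun y => adjOp k c (deriv g) y) x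
      = ∑ i ∈ range (k+1), (-1:ℝ)^i * Dop (i+1) (fun y => c i y * deriv g y) x := by
    unfold adjOp
    rw [deriv_fun_sum (fun i _ => (DifferentiableAt.const_mul
      (cd_diff (cd_dop ((hc i).mul hdg) i) x) _))]
    refine Finset.sum_congr rfl fun i _ => ?_
    rw [deriv_const_mul _ (cd_diff (cd_dop ((hc i).mul hdg) i) x), Dop_succ' i]
  rw [hR]
  -- LHS: split each coefficient
  unfold adjOp conjc
  have hsplit : ∀ n ∈ range (k+3),
      (-1:ℝ)^n * Dop n (fun y => (deriv (shc c n) y + shc (shc c) n y) * g y) x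
      = (-1:ℝ)^n * Dop n (fun y => deriv (shc c n) y * g y) x
        + (-1:ℝ)^n * Dop n (fun y => shc (shc c) n y * g y) x := by
    intro n _
    have : (fun y => (deriv (shc c n) y + shc (shc c) n y) * g y)
        = fun y => deriv (shc c n) y * g y + shc (shc c) n y * g y := by
      funext y; ring
    rw [this, Dop_add n ((cd_deriv (shc_smooth hc n)).mul hg)
      ((shc_smooth (shc_smooth hc) n).mul hg)]
    ring
  rw [Finset.sum_congr rfl hsplit, Finset.sum_add_distrib]
  have h1 : ∑ n ∈ range (k+3), (-1:ℝ)^n * Dop n (fun y => deriv (shc c n) y * g y) x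
      = ∑ i ∈ range (k+1), (-1:ℝ)^(i+1) * Dop (i+1) (fun y => deriv (c i) y * g y) x := by
    rw [Finset.sum_range_succ' _ (k+2)]
    simp only [shc, deriv_const']
    rw [Finset.sum_range_succ, hctop]
    simp only [deriv_const']
    simp [Dop_zero_fun]
  have h2 : ∑ n ∈ range (k+3), (-1:ℝ)^n * Dop n (fun y => shc (shc c) n y * g y) x
      = ∑ i ∈ range (k+1), (-1:ℝ)^i * Dop (i+2) (fun y => c i y * g y) x := by
    rw [Finset.sum_range_succ' _ (k+2)]
    simp only [shc]
    rw [Finset.sum_range_succ' _ (k+1)]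
    simp only [shc]
    simp [Dop_zero_fun, pow_succ]
  rw [h1, h2, ← Finset.sum_add_distrib]
  refine Finset.sum_congr rfl fun i _ => ?_
  have hd : Dop (i+2) (fun y => c i y * g y)
      = fun z => Dop (i+1) (fun y => deriv (c i) y * g y) z
          + Dop (i+1) (fun y => c i y * deriv g y) z := by
    rw [Dop_succ (i+1), show deriv (fun y => c i y * g y)
        = fun y => deriv (c i) y * g y + c i y * deriv g y from
      funext fun y => deriv_fun_mul (cd_diff (hc i) y) (cd_diff hg y)]
    exact Dop_add (i+1) ((cd_deriv (hc i)).mul hg) ((hc i).mul hdg)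
  rw [hd]
  ring

noncomputable def basec (B : ℝ → ℝ) : ℕ → ℝ → ℝ
  | 0 => deriv B
  | 1 => fun x => 2 * B x
  | _+2 => fun _ => 0

noncomputable def cm (B : ℝ → ℝ) : ℕ → ℕ → ℝ → ℝ
  | 0 => basec B
  | m+1 => conjc (cm B m)

lemma conjc_two (c : ℕ → ℝ → ℝ) (n : ℕ) :
    conjc c (n+2) = fun x => deriv (c (n+1)) x + c n x := rfl

lemma cm_smooth {B : ℝ → ℝ} (hB : ContDiff ℝ (⊤ : ℕ∞) B) (m : ℕ) (n : ℕ) :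
    ContDiff ℝ (⊤ : ℕ∞) (cm B m n) := by
  induction m generalizing n with
  | zero =>
    match n with
    | 0 => exact cd_deriv hB
    | 1 => exact contDiff_const.mul hB
    | n+2 => exact contDiff_const
  | succ m ih => exact conjc_smooth (fun i => ih i) n

lemma cm_vanish (B : ℝ → ℝ) (m : ℕ) : ∀ n, 2*m+1 < n → cm B m n = fun _ => 0 := by
  induction m with
  | zero =>
    intro n hn
    match n, hn with
    | n+2, _ => rfl
  | succ m ih =>
    intro n hn
    match n, hn with
    | n+2, hn =>
      show conjc (cm B m) (n+2) = fun _ => 0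
      rw [conjc_two, ih (n+1) (by omega), ih n (by omega)]
      funext x
      simp

lemma cm_top (B : ℝ → ℝ) (m : ℕ) : cm B m (2*m+1) = fun x => 2 * B x := by
  induction m with
  | zero => rfl
  | succ m ih =>
    have h : 2*(m+1)+1 = (2*m+1)+2 := by ring
    rw [h]
    show conjc (cm B m) ((2*m+1)+2) = fun x => 2 * B x
    rw [conjc_two, cm_vanish B m (2*m+1+1) (by omega), ih]
    funext x
    simp

lemma cm_eval {B : ℝ → ℝ} (hB : ContDiff ℝ (⊤ : ℕ∞) B) (m : ℕ) {f : ℝ → ℝ}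
    (hf : ContDiff ℝ (⊤ : ℕ∞) f) (x : ℝ) :
    LOp (2*m+1) (cm B m) f x =
      Dop m (fun y => B y * Dop (m+1) f y + deriv (fun z => B z * Dop m f z) y) x := by
  induction m generalizing f x with
  | zero =>
    show LOp 1 (basec B) f x = _
    unfold LOp
    rw [Finset.sum_range_succ, Finset.sum_range_one]
    show basec B 0 x * Dop 0 f x + basec B 1 x * Dop 1 f x = _
    simp only [basec, Dop_succ' 0 f, Dop_zero_fun]
    show deriv B x * f x + 2 * B x * deriv f x
      = Dop 0 (fun y => B y * Dop 1 f y + deriv (fun z => B z * Dop 0 f z) y) x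
    show deriv B x * f x + 2 * B x * deriv f x
      = B x * Dop 1 f x + deriv (fun z => B z * Dop 0 f z) x
    rw [Dop_succ' 0 f, show (fun z => B z * Dop 0 f z) = fun z => B z * f z from rfl,
      show deriv (fun z => B z * f z) x = deriv B x * f x + B x * deriv f x from
        deriv_fun_mul (cd_diff hB x) (cd_diff hf x)]
    show deriv B x * f x + 2 * B x * deriv (Dop 0 f) x
      = B x * deriv (Dop 0 f) x + (deriv B x * f x + B x * deriv f x)
    show deriv B x * f x + 2 * B x * deriv f x
      = B x * deriv f x + (deriv B x * f x + B x * deriv f x)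
    ring
  | succ m ih =>
    have h : 2*(m+1)+1 = (2*m+1)+2 := by ring
    rw [h]
    show LOp ((2*m+1)+2) (conjc (cm B m)) f x = _
    rw [LOp_conj (2*m+1) (cm B m) (cm_smooth hB m) (cm_vanish B m (2*m+1+1) (by omega))
      hf x]
    have hIH : (fun y => LOp (2*m+1) (cm B m) (deriv f) y)
        = fun y => Dop m (fun z => B z * Dop (m+1) (deriv f) z
            + deriv (fun w => B w * Dop m (deriv f) w) z) y :=
      funext fun y => ih (cd_deriv hf) y
    rw [hIH]
    have hinner : (fun z => B z * Dop (m+1) (deriv f) z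
          + deriv (fun w => B w * Dop m (deriv f) w) z)
        = fun z => B z * Dop (m+1+1) f z + deriv (fun w => B w * Dop (m+1) f w) z := by
      rw [Dop_succ (m+1) f, Dop_succ m f]
    rw [hinner, ← Dop_succ' m]

lemma cm_skew {B : ℝ → ℝ} (hB : ContDiff ℝ (⊤ : ℕ∞) B) (m : ℕ) {g : ℝ → ℝ}
    (hg : ContDiff ℝ (⊤ : ℕ∞) g) (x : ℝ) :
    adjOp (2*m+1) (cm B m) g x = - LOp (2*m+1) (cm B m) g x := by
  induction m generalizing g x with
  | zero =>
    show adjOp 1 (basec B) g x = - LOp 1 (basec B) g x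
    unfold adjOp LOp
    rw [Finset.sum_range_succ, Finset.sum_range_one, Finset.sum_range_succ,
      Finset.sum_range_one]
    show (-1:ℝ)^0 * Dop 0 (fun y => basec B 0 y * g y) x
        + (-1:ℝ)^1 * Dop 1 (fun y => basec B 1 y * g y) x
      = -(basec B 0 x * Dop 0 g x + basec B 1 x * Dop 1 g x)
    simp only [basec, pow_zero, pow_one, Dop_zero, Dop_succ' 0 g]
    have hd2B : DifferentiableAt ℝ (fun y => 2 * B y) x :=
      cd_diff (contDiff_const.mul hB) x
    rw [Dop_succ' 0 (fun y => 2 * B y * g y), Dop_zero,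
      deriv_fun_mul hd2B (cd_diff hg x), deriv_const_mul 2 (cd_diff hB x)]
    ring
  | succ m ih =>
    have h : 2*(m+1)+1 = (2*m+1)+2 := by ring
    rw [h]
    show adjOp ((2*m+1)+2) (conjc (cm B m)) g x = - LOp ((2*m+1)+2) (conjc (cm B m)) g x
    rw [adjOp_conj (2*m+1) (cm B m) (cm_smooth hB m) (cm_vanish B m (2*m+1+1) (by omega))
      hg x,
      LOp_conj (2*m+1) (cm B m) (cm_smooth hB m) (cm_vanish B m (2*m+1+1) (by omega))
      hg x]
    have hIH : (fun y => adjOp (2*m+1) (cm B m) (deriv g) y)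
        = fun y => -(LOp (2*m+1) (cm B m) (deriv g) y) :=
      funext fun y => ih (cd_deriv hg) y
    rw [hIH, deriv.fun_neg]

lemma LOp_drop (k : ℕ) (a : ℕ → ℝ → ℝ) (h : a (k+1) = fun _ => 0) (f : ℝ → ℝ) (x : ℝ) :
    LOp (k+1) a f x = LOp k a f x := by
  unfold LOp
  rw [Finset.sum_range_succ, h]
  simp

lemma adjOp_drop (k : ℕ) (a : ℕ → ℝ → ℝ) (h : a (k+1) = fun _ => 0) (g : ℝ → ℝ) (x : ℝ) :
    adjOp (k+1) a g x = adjOp k a g x := by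
  unfold adjOp
  rw [Finset.sum_range_succ, h]
  have : (fun y => (fun _ : ℝ => (0:ℝ)) y * g y) = fun _ : ℝ => (0:ℝ) := by
    funext y; simp
  rw [this, Dop_zero_fun]
  simp

lemma LOp_sub (k : ℕ) (a c : ℕ → ℝ → ℝ) (f : ℝ → ℝ) (x : ℝ) :
    LOp k (fun i x => a i x - c i x) f x = LOp k a f x - LOp k c f x := by
  unfold LOp
  rw [← Finset.sum_sub_distrib]
  exact Finset.sum_congr rfl fun i _ => by ring

lemma adjOp_sub (k : ℕ) (a c : ℕ → ℝ → ℝ) (ha : ∀ i, ContDiff ℝ (⊤ : ℕ∞) (a i))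
    (hc : ∀ i, ContDiff ℝ (⊤ : ℕ∞) (c i)) {g : ℝ → ℝ} (hg : ContDiff ℝ (⊤ : ℕ∞) g) (x : ℝ) :
    adjOp k (fun i x => a i x - c i x) g x = adjOp k a g x - adjOp k c g x := by
  unfold adjOp
  rw [← Finset.sum_sub_distrib]
  refine Finset.sum_congr rfl fun i _ => ?_
  have h1 : (fun y => (a i y - c i y) * g y)
      = fun y => a i y * g y - c i y * g y := by funext y; ring
  rw [h1, Dop_sub i ((ha i).mul hg) ((hc i).mul hg)]
  ring

lemma even_top_zero (k : ℕ) (hk : Even k) (a : ℕ → ℝ → ℝ)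
    (ha : ∀ i, ContDiff ℝ (⊤ : ℕ∞) (a i))
    (hsk : ∀ g : ℝ → ℝ, ContDiff ℝ (⊤ : ℕ∞) g → ∀ x, adjOp k a g x = - LOp k a g x) :
    a k = fun _ => 0 := by
  funext x0
  have hg : ContDiff ℝ (⊤ : ℕ∞) (fun y : ℝ => (y - x0)^k) := cd_pow x0 k
  have h := hsk _ hg x0
  have hone : (fun y : ℝ => (y - x0)^k) = fun y => (fun _ : ℝ => (1:ℝ)) y * (y - x0)^k := by
    funext y; ring
  have hL : LOp k a (fun y : ℝ => (y - x0)^k) x0 = a k x0 * (k.factorial : ℝ) := by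
    unfold LOp
    rw [Finset.sum_range_succ]
    rw [Finset.sum_eq_zero (fun i hi => by
      rw [hone, Dop_mul_pow_lt x0 i k _ contDiff_const (Finset.mem_range.mp hi), mul_zero])]
    rw [hone, Dop_mul_pow_self x0 k _ contDiff_const]
    simp
  have hA : adjOp k a (fun y : ℝ => (y - x0)^k) x0
      = (-1:ℝ)^k * ((k.factorial : ℝ) * a k x0) := by
    unfold adjOp
    rw [Finset.sum_range_succ]
    rw [Finset.sum_eq_zero (fun i hi => by
      rw [Dop_mul_pow_lt x0 i k _ (ha i) (Finset.mem_range.mp hi), mul_zero])]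
    rw [Dop_mul_pow_self x0 k _ (ha k)]
    simp
  rw [hA, hL, hk.neg_one_pow] at h
  have hfac : (0:ℝ) < (k.factorial : ℝ) := by positivity
  nlinarith [h]

lemma main_canon : ∀ k : ℕ, ∀ a : ℕ → ℝ → ℝ, (∀ i, ContDiff ℝ (⊤ : ℕ∞) (a i)) →
    (∀ g : ℝ → ℝ, ContDiff ℝ (⊤ : ℕ∞) g → ∀ x, adjOp k a g x = - LOp k a g x) →
    ∃ A : ℕ → ℝ → ℝ, (∀ i, ContDiff ℝ (⊤ : ℕ∞) (A i)) ∧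
      ∀ f : ℝ → ℝ, ContDiff ℝ (⊤ : ℕ∞) f → ∀ x,
        LOp k a f x = ∑ i ∈ Finset.range ((k - 1) / 2 + 1),
            Dop i (fun y => A i y * Dop (i + 1) f y +
              deriv (fun z => A i z * Dop i f z) y) x := by
  intro k
  induction k using Nat.strong_induction_on with
  | _ k IH =>
  intro a ha hsk
  rcases Nat.even_or_odd k with hk | hk
  · -- even case
    have htop : a k = fun _ => 0 := even_top_zero k hk a ha hsk
    match k, hk, htop, hsk, IH with
    | 0, _, htop, hsk, IH =>
      refine ⟨fun _ _ => 0, fun i => contDiff_const, fun f hf x => ?_⟩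
      have hL : LOp 0 a f x = 0 := by
        unfold LOp
        rw [Finset.sum_range_one, htop]
        simp
      rw [hL, show (0-1)/2+1 = 1 from rfl, Finset.sum_range_one]
      have h1 : (fun y => (fun _ _ => (0:ℝ)) 0 y * Dop (0+1) f y +
          deriv (fun z => (fun _ _ => (0:ℝ)) 0 z * Dop 0 f z) y) = fun _ : ℝ => (0:ℝ) := by
        funext y
        simp
      rw [h1, Dop_zero_fun]
    | (k'+1), hk, htop, hsk, IH =>
      obtain ⟨A, hA, hAf⟩ := IH k' (by omega) a ha (fun g hg x => by
        rw [← adjOp_drop k' a htop g x, ← LOp_drop k' a htop g x]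
        exact hsk g hg x)
      refine ⟨A, hA, fun f hf x => ?_⟩
      rw [LOp_drop k' a htop f x, hAf f hf x]
      have hr : (k'+1-1)/2 = (k'-1)/2 := by
        rcases hk with ⟨j, hj⟩
        omega
      rw [hr]
  · -- odd case
    rw [Nat.odd_iff] at hk
    obtain ⟨m, rfl⟩ : ∃ m, k = 2*m+1 := ⟨k/2, by omega⟩
    have hB : ContDiff ℝ (⊤ : ℕ∞) (fun x => a (2*m+1) x / 2) := (ha (2*m+1)).div_const 2
    set B : ℝ → ℝ := fun x => a (2*m+1) x / 2 with hBdef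
    set c : ℕ → ℝ → ℝ := cm B m with hcdef
    have hcsm : ∀ i, ContDiff ℝ (⊤ : ℕ∞) (c i) := cm_smooth hB m
    set b : ℕ → ℝ → ℝ := fun i x => a i x - c i x with hbdef
    have hbsm : ∀ i, ContDiff ℝ (⊤ : ℕ∞) (b i) := fun i => (ha i).sub (hcsm i)
    have hbtop : b (2*m+1) = fun _ => 0 := by
      funext x
      show a (2*m+1) x - c (2*m+1) x = 0
      rw [hcdef, cm_top B m]
      show a (2*m+1) x - 2 * (a (2*m+1) x / 2) = 0
      ring
    have hbskew : ∀ g : ℝ → ℝ, ContDiff ℝ (⊤ : ℕ∞) g → ∀ x,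
        adjOp (2*m) b g x = - LOp (2*m) b g x := by
      intro g hg x
      have h1 : adjOp (2*m+1) b g x = - LOp (2*m+1) b g x := by
        rw [hbdef, adjOp_sub (2*m+1) a c ha hcsm hg x, LOp_sub (2*m+1) a c g x,
          hsk g hg x, cm_skew hB m hg x]
        ring
      rw [← adjOp_drop (2*m) b hbtop g x, ← LOp_drop (2*m) b hbtop g x]
      exact h1
    obtain ⟨A', hA', hA'f⟩ := IH (2*m) (by omega) b hbsm hbskew
    have hdecomp : ∀ f : ℝ → ℝ, ContDiff ℝ (⊤ : ℕ∞) f → ∀ x,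
        LOp (2*m+1) a f x = LOp (2*m) b f x
          + Dop m (fun y => B y * Dop (m+1) f y + deriv (fun z => B z * Dop m f z) y) x := by
      intro f hf x
      have h1 : LOp (2*m+1) b f x = LOp (2*m+1) a f x - LOp (2*m+1) c f x :=
        LOp_sub (2*m+1) a c f x
      have h2 : LOp (2*m+1) b f x = LOp (2*m) b f x := LOp_drop (2*m) b hbtop f x
      have h3 : LOp (2*m+1) c f x
          = Dop m (fun y => B y * Dop (m+1) f y + deriv (fun z => B z * Dop m f z) y) x :=
        cm_eval hB m hf x
      rw [← h3, ← h2]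
      linarith [h1]
    rcases Nat.eq_zero_or_pos m with rfl | hm
    · -- m = 0
      refine ⟨fun i => if i = 0 then (fun x => A' 0 x + B x) else A' i, ?_, ?_⟩
      · intro i
        by_cases hi : i = 0
        · beta_reduce; rw [if_pos hi]; exact (hA' 0).add hB
        · beta_reduce; rw [if_neg hi]; exact hA' i
      intro f hf x
      rw [hdecomp f hf x]
      rw [show (2*0+1-1)/2+1 = 1 from rfl, Finset.sum_range_one]
      beta_reduce
      rw [if_pos rfl]
      rw [hA'f f hf x, show (2*0-1)/2+1 = 1 from rfl, Finset.sum_range_one]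
      simp only [Dop_zero, Nat.reduceAdd]
      have hsplit : (fun z => (A' 0 z + B z) * f z)
          = fun z => A' 0 z * f z + B z * f z := by
        funext z; ring
      have hda : DifferentiableAt ℝ (fun z => A' 0 z * f z) x :=
        cd_diff ((hA' 0).mul hf) x
      have hdb : DifferentiableAt ℝ (fun z => B z * f z) x :=
        cd_diff (hB.mul hf) x
      rw [hsplit, deriv_fun_add hda hdb]
      ring
    · -- m ≥ 1
      refine ⟨fun i => if i = m then B else A' i, ?_, ?_⟩
      · intro i
        by_cases hi : i = m
        · beta_reduce; rw [if_pos hi]; exact hB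
        · beta_reduce; rw [if_neg hi]; exact hA' i
      intro f hf x
      rw [hdecomp f hf x]
      have hr1 : (2*m+1-1)/2+1 = m+1 := by omega
      rw [hr1, Finset.sum_range_succ]
      beta_reduce
      rw [if_pos rfl]
      have hr2 : (2*m-1)/2+1 = m := by omega
      rw [hA'f f hf x, hr2]
      congr 1
      refine Finset.sum_congr rfl fun i hi => ?_
      beta_reduce
      rw [if_neg (show ¬i = m by have := Finset.mem_range.mp hi; omega)]

/-- canonical form for formally skew-adjoint operators:
L = sum over i of D^i (A_i · D^(i+1) - + D(A_i · D^i -)). -/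
theorem skewadjoint_canonical_form (k : ℕ) (a : ℕ → ℝ → ℝ)
    (ha : ∀ i, ContDiff ℝ (⊤ : ℕ∞) (a i))
    (hsk : ∀ g : ℝ → ℝ, ContDiff ℝ (⊤ : ℕ∞) g → ∀ x, adjOp k a g x = - LOp k a g x) :
    ∃ A : ℕ → ℝ → ℝ, (∀ i, ContDiff ℝ (⊤ : ℕ∞) (A i)) ∧
      ∀ f : ℝ → ℝ, ContDiff ℝ (⊤ : ℕ∞) f → ∀ x,
        LOp k a f x =
          ∑ i ∈ Finset.range ((k - 1) / 2 + 1),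
            Dop i (fun y => A i y * Dop (i + 1) f y +
              deriv (fun z => A i z * Dop i f z) y) x := by
  exact main_canon k a ha hsk
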